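/- arXiv:2301.11113 — 2 statements merged into one kernel-verified Lean document; each statement's English description precedes it below -/
import Mathlib

section
/- Let {L_i}_{i ∈ L} be a finite partition of ℝ^n where each L_i is defined by finitely many affine inequalities aᵀx ≤ b or aᵀx < b with parameter set N^i, each leaf carries a value p_i ∈ [0,1], and τ ∈ [0,1]. Define h̃(x) = τ if x ∈ L_i with p_i ≥ τ, and h̃(x) = τ − min_{(a,b) ∈ N^i}(b − aᵀx) if x ∈ L_i with p_i < τ. Then h̃ is Lipschitz continuous on ℝ^n with Lipschitz constant L = max_i max_{(a,b) ∈ N^i} ‖a‖. -/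
open scoped Classical

/-- The piecewise-linear extension `h̃` of a decision-tree classifier is Lipschitz continuous
with constant `L = max_i max_{(a,b) ∈ N^i} ‖a‖`. -/
theorem tree_extension_lipschitz {n : ℕ} {ι : Type*} [Fintype ι] [Nonempty ι]
    (Nle Nlt : ι → Finset (EuclideanSpace ℝ (Fin n) × ℝ))
    (hNe : ∀ i, (Nle i ∪ Nlt i).Nonempty)
    (p : ι → ℝ) (hp : ∀ i, p i ∈ Set.Icc (0 : ℝ) 1)
    (τ : ℝ) (hτ : τ ∈ Set.Icc (0 : ℝ) 1)
    (L : ι → Set (EuclideanSpace ℝ (Fin n)))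
    (hL : ∀ i, L i = {x | (∀ ab ∈ Nle i, (inner ℝ ab.1 x : ℝ) ≤ ab.2) ∧
                          (∀ ab ∈ Nlt i, (inner ℝ ab.1 x : ℝ) < ab.2)})
    -- the leaves partition ℝ^n, and `leaf x` is the unique leaf containing `x`
    (leaf : EuclideanSpace ℝ (Fin n) → ι)
    (hleaf : ∀ x, x ∈ L (leaf x))
    (huniq : ∀ x i, x ∈ L i → i = leaf x)
    (htilde : EuclideanSpace ℝ (Fin n) → ℝ)
    (hhtilde : ∀ x, htilde x =
      if τ ≤ p (leaf x) then τ
      else τ - (Nle (leaf x) ∪ Nlt (leaf x)).inf' (hNe (leaf x))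
        (fun ab => ab.2 - (inner ℝ ab.1 x : ℝ))) :
    ∀ x y, |htilde x - htilde y| ≤
      (Finset.univ.sup' Finset.univ_nonempty
        (fun i => (Nle i ∪ Nlt i).sup' (hNe i) (fun ab => ‖ab.1‖))) * ‖x - y‖ := by
  set Lc := Finset.univ.sup' Finset.univ_nonempty
        (fun i => (Nle i ∪ Nlt i).sup' (hNe i) (fun ab => ‖ab.1‖)) with hLcdef
  have hnorm_le : ∀ i, ∀ ab ∈ Nle i ∪ Nlt i, ‖ab.1‖ ≤ Lc := by
    intro i ab hab
    calc ‖ab.1‖ ≤ (Nle i ∪ Nlt i).sup' (hNe i) (fun ab => ‖ab.1‖) :=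
          Finset.le_sup' (fun ab => ‖ab.1‖) hab
      _ ≤ Lc := by
          rw [hLcdef]
          exact Finset.le_sup'
            (fun i => (Nle i ∪ Nlt i).sup' (hNe i) fun ab => ‖ab.1‖)
            (Finset.mem_univ i)
  have hLc0 : 0 ≤ Lc := by
    obtain ⟨i⟩ := (inferInstance : Nonempty ι)
    obtain ⟨ab, hab⟩ := hNe i
    exact le_trans (norm_nonneg ab.1) (hnorm_le i ab hab)
  have hcs : ∀ (a : EuclideanSpace ℝ (Fin n)) (u v : EuclideanSpace ℝ (Fin n)),
      (inner ℝ a u : ℝ) - inner ℝ a v ≤ ‖a‖ * ‖u - v‖ := by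
    intro a u v
    rw [← inner_sub_right]
    exact real_inner_le_norm _ _
  have hmem_pos : ∀ i x, x ∈ L i → ∀ ab ∈ Nle i ∪ Nlt i,
      (0 : ℝ) ≤ ab.2 - inner ℝ ab.1 x := by
    intro i x hx ab hab
    rw [hL i] at hx
    rcases Finset.mem_union.1 hab with h | h
    · linarith [hx.1 ab h]
    · linarith [hx.2 ab h]
  have hviol : ∀ i x, x ∉ L i → ∃ ab ∈ Nle i ∪ Nlt i,
      ab.2 - (inner ℝ ab.1 x : ℝ) ≤ 0 := by
    intro i x hx
    rw [hL i] at hx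
    simp only [Set.mem_setOf_eq, not_and_or, not_forall] at hx
    rcases hx with ⟨ab, hab, h⟩ | ⟨ab, hab, h⟩
    · exact ⟨ab, Finset.mem_union_left _ hab, by push_neg at h; linarith⟩
    · exact ⟨ab, Finset.mem_union_right _ hab, by push_neg at h; linarith⟩
  suffices key : ∀ x y, htilde x - htilde y ≤ Lc * ‖x - y‖ by
    intro x y
    rw [abs_sub_le_iff]
    refine ⟨key x y, ?_⟩
    have := key y x
    rwa [norm_sub_rev] at this
  intro x y
  have hxy : (0:ℝ) ≤ Lc * ‖x - y‖ := mul_nonneg hLc0 (norm_nonneg _)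
  rw [hhtilde x, hhtilde y]
  split_ifs with h1 h2 h2
  · simpa using hxy
  · -- htilde x = τ, y in sad leaf; leaf y ≠ leaf x so x ∉ L (leaf y)
    have hne : leaf y ≠ leaf x := fun h => h2 (h ▸ h1)
    have hxnot : x ∉ L (leaf y) := fun hx => hne (huniq x _ hx)
    obtain ⟨ab, hab, habneg⟩ := hviol (leaf y) x hxnot
    have hinf : (Nle (leaf y) ∪ Nlt (leaf y)).inf' (hNe (leaf y))
        (fun ab => ab.2 - (inner ℝ ab.1 y : ℝ)) ≤ ab.2 - inner ℝ ab.1 y :=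
      Finset.inf'_le _ hab
    have h3 := hcs ab.1 x y
    have h4 : ‖ab.1‖ * ‖x - y‖ ≤ Lc * ‖x - y‖ :=
      mul_le_mul_of_nonneg_right (hnorm_le _ ab hab) (norm_nonneg _)
    linarith
  · -- x sad, y happy: LHS ≤ 0
    have hinf : (0:ℝ) ≤ (Nle (leaf x) ∪ Nlt (leaf x)).inf' (hNe (leaf x))
        (fun ab => ab.2 - (inner ℝ ab.1 x : ℝ)) :=
      Finset.le_inf' _ _ (fun ab hab => hmem_pos (leaf x) x (hleaf x) ab hab)
    linarith
  · -- both sad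
    by_cases hij : leaf x = leaf y
    · rw [hij]
      obtain ⟨ab, hab, habeq⟩ := Finset.exists_mem_eq_inf'
        (hNe (leaf y)) (fun ab => ab.2 - (inner ℝ ab.1 x : ℝ))
      have hinf : (Nle (leaf y) ∪ Nlt (leaf y)).inf' (hNe (leaf y))
          (fun ab => ab.2 - (inner ℝ ab.1 y : ℝ)) ≤ ab.2 - inner ℝ ab.1 y :=
        Finset.inf'_le _ hab
      have h3 := hcs ab.1 x y
      have h4 : ‖ab.1‖ * ‖x - y‖ ≤ Lc * ‖x - y‖ :=
        mul_le_mul_of_nonneg_right (hnorm_le _ ab hab) (norm_nonneg _)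
      linarith [habeq.ge, habeq.le]
    · have hxnot : x ∉ L (leaf y) := fun hx => hij ((huniq x _ hx).symm)
      obtain ⟨ab, hab, habneg⟩ := hviol (leaf y) x hxnot
      have hinfy : (Nle (leaf y) ∪ Nlt (leaf y)).inf' (hNe (leaf y))
          (fun ab => ab.2 - (inner ℝ ab.1 y : ℝ)) ≤ ab.2 - inner ℝ ab.1 y :=
        Finset.inf'_le _ hab
      have hinfx : (0:ℝ) ≤ (Nle (leaf x) ∪ Nlt (leaf x)).inf' (hNe (leaf x))
          (fun ab => ab.2 - (inner ℝ ab.1 x : ℝ)) :=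
        Finset.le_inf' _ _ (fun ab hab => hmem_pos (leaf x) x (hleaf x) ab hab)
      have h3 := hcs ab.1 x y
      have h4 : ‖ab.1‖ * ‖x - y‖ ≤ Lc * ‖x - y‖ :=
        mul_le_mul_of_nonneg_right (hnorm_le _ ab hab) (norm_nonneg _)
      linarith
end

section
/- Let h : X → [0,1] be Lipschitz continuous on a bounded set X ⊆ ℝ^n with constant L, let S ⊂ ℝ^n be compact, and let τ, ε > 0 be given. Suppose a sequence of iterates x^k ∈ X and scenarios s^k ∈ S satisfies: for all k and all j < k, h(x^k + s^j) ≥ τ (feasibility for previously found scenarios), and τ − h(x^k + s^k) > ε (each new scenario is ε-violating). Then the sequence must be finite; i.e., the adversarial algorithm terminates after finitely many iterations with a solution x* satisfying h(x* + s) ≥ τ − ε for all s ∈ S. -/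
/-!
Each violating scenario `s j` separates the iterate `x j` from every later iterate `x k`:
`h (x k + s j) ≥ τ` while `h (x j + s j) < τ - ε`, so the Lipschitz bound forces
`L * ‖x k - x j‖ > ε`. An infinite sequence of pairwise `ε / L`-separated points cannot
lie in a bounded subset of `ℝⁿ`, by pigeonhole over a finite cover by small balls.
-/

open Pointwise

theorem TotallyBounded.exists_lt_dist_lt {α : Type*} [PseudoMetricSpace α] {X : Set α}
    (hX : TotallyBounded X) {x : ℕ → α} (hx : ∀ k, x k ∈ X) {δ : ℝ} (hδ : 0 < δ) :
    ∃ j k, j < k ∧ dist (x k) (x j) < δ := by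
  obtain ⟨t, ht, hcover⟩ := Metric.totallyBounded_iff.1 hX (δ / 2) (half_pos hδ)
  have hcenter : ∀ k, ∃ c : t, x k ∈ Metric.ball (c : α) (δ / 2) := fun k => by
    simpa using hcover (hx k)
  choose c hc using hcenter
  have : Finite t := ht.to_subtype
  obtain ⟨j, k, hne, hjk⟩ := Finite.exists_ne_map_eq_of_infinite c
  have hclose : dist (x k) (x j) < δ := calc
    dist (x k) (x j) ≤ dist (x k) (c k) + dist (x j) (c j) := by
      rw [hjk]; exact dist_triangle_right _ _ _
    _ < δ / 2 + δ / 2 := add_lt_add (hc k) (hc j)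
    _ = δ := add_halves δ
  rcases hne.lt_or_gt with hlt | hgt
  · exact ⟨j, k, hlt, hclose⟩
  · exact ⟨k, j, hgt, dist_comm (x k) (x j) ▸ hclose⟩

theorem LipschitzOnWith.sub_le_mul_dist_of_add_mem {E : Type*} [SeminormedAddCommGroup E]
    {h : E → ℝ} {L : NNReal} {X S : Set E} (hLip : LipschitzOnWith L h (X + S))
    {a b s : E} (ha : a ∈ X) (hb : b ∈ X) (hs : s ∈ S) :
    h (a + s) - h (b + s) ≤ L * dist a b := calc
  h (a + s) - h (b + s) ≤ dist (h (a + s)) (h (b + s)) := le_abs_self _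
  _ ≤ L * dist (a + s) (b + s) :=
    hLip.dist_le_mul _ (Set.add_mem_add ha hs) _ (Set.add_mem_add hb hs)
  _ = L * dist a b := by rw [dist_add_right]

theorem adversarial_algorithm_terminates_general {n : ℕ}
    (X S : Set (EuclideanSpace ℝ (Fin n)))
    (hX : Bornology.IsBounded X)
    (h : EuclideanSpace ℝ (Fin n) → ℝ) (L : NNReal)
    (hLip : LipschitzOnWith L h (X + S))
    (τ ε : ℝ) (hε : 0 < ε)
    (x s : ℕ → EuclideanSpace ℝ (Fin n))
    (hx : ∀ k, x k ∈ X) (hs : ∀ k, s k ∈ S)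
    (hfeas : ∀ k j, j < k → τ ≤ h (x k + s j))
    (hviol : ∀ k, ε < τ - h (x k + s k)) :
    False := by
  have hXtb : TotallyBounded X := hX.isCompact_closure.totallyBounded.subset subset_closure
  obtain ⟨j, k, hjk, hclose⟩ := hXtb.exists_lt_dist_lt hx (δ := ε / (L + 1)) (by positivity)
  have hLclose : (L + 1) * dist (x k) (x j) < ε := (lt_div_iff₀' (by positivity)).1 hclose
  have hgap := hLip.sub_le_mul_dist_of_add_mem (hx k) (hx j) (hs j)
  linarith [hfeas k j hjk, hviol j, dist_nonneg (x := x k) (y := x j)]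

/-- Convergence of the adversarial (cutting-plane) algorithm: if `h` is Lipschitz on the
relevant bounded region, there is no infinite sequence of iterates each of which is feasible
for all previously found scenarios while admitting a new `ε`-violating scenario. Hence the
algorithm terminates after finitely many steps with `h(x* + s) ≥ τ - ε` for all `s ∈ S`. -/
theorem adversarial_algorithm_terminates {n : ℕ}
    (X S : Set (EuclideanSpace ℝ (Fin n)))
    (hX : Bornology.IsBounded X) (hS : IsCompact S)
    (h : EuclideanSpace ℝ (Fin n) → ℝ) (L : NNReal)
    (hLip : LipschitzOnWith L h (X + S))
    (hrange : ∀ z ∈ X + S, h z ∈ Set.Icc (0 : ℝ) 1)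
    (τ ε : ℝ) (hτ : 0 < τ) (hε : 0 < ε)
    (x s : ℕ → EuclideanSpace ℝ (Fin n))
    (hx : ∀ k, x k ∈ X) (hs : ∀ k, s k ∈ S)
    (hfeas : ∀ k j, j < k → τ ≤ h (x k + s j))
    (hviol : ∀ k, ε < τ - h (x k + s k)) :
    False :=
  adversarial_algorithm_terminates_general X S hX h L hLip τ ε hε x s hx hs hfeas hviol
end
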